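/- Let p be a prime with p ≡ 2 or 3 (mod 5) and r a positive integer. Define φ_O : (F_{p²})^r → M_{2×2r}(F_p) by sending (c_1+d_1ω, …, c_r+d_rω) to the 2×2r matrix whose i-th 2×2 block is [[d_i, c_i],[c_i+d_i, d_i]]. Then the image φ_O((F_{p²})^r) is an F_p-linear subspace of M_{2×2r}(F_p) of dimension 2r in which every nonzero element has rank 2; i.e., it is a [2×2r, 2r, 2] rank-metric code. -/

import Mathlib

/-!
A root of `μ² = μ + 1` in `𝔽_p` would make `5 = (2μ - 1)²` a square mod `p`, hence, by quadratic
reciprocity, `p` a square mod `5`, which excludes `p ≡ 2, 3 (mod 5)`. Consequently the block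
`[[d, c], [c + d, d]]`, whose determinant is `d² - cd - c²`, is invertible unless `c = d = 0`,
so a nonzero codeword has an invertible `2 × 2` block and therefore rank `2`.
-/

/-- The 2×2r matrix whose i-th 2×2 block is [[dᵢ, cᵢ],[cᵢ+dᵢ, dᵢ]]. -/
def blockPhi (p r : ℕ) (c d : Fin r → ZMod p) : Matrix (Fin 2) (Fin (2 * r)) (ZMod p) :=
  Matrix.of fun u j =>
    if u = (0 : Fin 2) then
      (if (j : ℕ) % 2 = 0 then d ⟨(j : ℕ) / 2, by have := j.isLt; omega⟩
       else c ⟨(j : ℕ) / 2, by have := j.isLt; omega⟩)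
    else
      (if (j : ℕ) % 2 = 0 then
        c ⟨(j : ℕ) / 2, by have := j.isLt; omega⟩ + d ⟨(j : ℕ) / 2, by have := j.isLt; omega⟩
       else d ⟨(j : ℕ) / 2, by have := j.isLt; omega⟩)

open Matrix

theorem ZMod.mul_self_ne_add_one {p : ℕ} [Fact p.Prime] (h5 : p % 5 = 2 ∨ p % 5 = 3)
    (μ : ZMod p) : μ * μ ≠ μ + 1 := by
  intro hμ
  rcases eq_or_ne p 2 with rfl | hp2
  · revert μ; decide +revert
  have hsq : IsSquare ((5 : ℕ) : ZMod p) := ⟨2 * μ - 1, by push_cast; linear_combination -4 * hμ⟩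
  have : Fact (Nat.Prime 5) := ⟨by norm_num⟩
  rw [← ZMod.exists_sq_eq_prime_iff_of_mod_four_eq_one (by norm_num) hp2,
    ← ZMod.natCast_mod p 5] at hsq
  rcases h5 with h | h <;> rw [h] at hsq <;> revert hsq <;> decide +revert

theorem mul_self_sub_mul_add_ne_zero {F : Type*} [Field F] (hroot : ∀ μ : F, μ * μ ≠ μ + 1)
    {a b : F} (hab : a ≠ 0 ∨ b ≠ 0) : a * a - b * (b + a) ≠ 0 := by
  intro h
  by_cases hb : b = 0
  · subst hb
    simp_all
  · apply hroot (a / b)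
    field_simp
    linear_combination h

theorem Matrix.rank_eq_of_det_submatrix_ne_zero {F n : Type*} [Field F] [Fintype n] {m : ℕ}
    (A : Matrix (Fin m) n F) (col : Fin m → n) (h : (A.submatrix id col).det ≠ 0) :
    A.rank = m := by
  refine le_antisymm (A.rank_le_card_height.trans_eq (Fintype.card_fin m)) ?_
  calc m = (A.submatrix id col).rank := by
        rw [rank_of_isUnit _ ((isUnit_iff_isUnit_det _).mpr h.isUnit), Fintype.card_fin]
    _ ≤ A.rank := rank_submatrix_le A id col

section blockPhi

variable {p r : ℕ}

def blockCols (i : Fin r) : Fin 2 → Fin (2 * r) :=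
  fun s => ⟨2 * i + s, by omega⟩

theorem blockPhi_submatrix_blockCols (c d : Fin r → ZMod p) (i : Fin r) :
    (blockPhi p r c d).submatrix id (blockCols i) = !![d i, c i; c i + d i, d i] := by
  ext u s
  fin_cases u <;> fin_cases s <;>
    simp [blockPhi, blockCols, Nat.mul_add_div]

theorem blockPhi_eq_zero_iff (c d : Fin r → ZMod p) :
    blockPhi p r c d = 0 ↔ c = 0 ∧ d = 0 := by
  constructor
  · intro h
    have hblock (i : Fin r) := congrArg (fun M => M.submatrix id (blockCols i)) h
    simp only [blockPhi_submatrix_blockCols] at hblock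
    exact ⟨funext fun i => congrFun (congrFun (hblock i) 0) 1,
      funext fun i => congrFun (congrFun (hblock i) 0) 0⟩
  · rintro ⟨rfl, rfl⟩
    ext u j
    simp [blockPhi]

theorem rank_blockPhi [Fact p.Prime] (hroot : ∀ μ : ZMod p, μ * μ ≠ μ + 1)
    (c d : Fin r → ZMod p) (h : blockPhi p r c d ≠ 0) : (blockPhi p r c d).rank = 2 := by
  obtain ⟨i, hi⟩ : ∃ i, d i ≠ 0 ∨ c i ≠ 0 := by
    by_contra! hcd
    exact h ((blockPhi_eq_zero_iff c d).mpr ⟨funext fun i => (hcd i).2, funext fun i => (hcd i).1⟩)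
  apply rank_eq_of_det_submatrix_ne_zero _ (blockCols i)
  rw [blockPhi_submatrix_blockCols, det_fin_two_of]
  exact mul_self_sub_mul_add_ne_zero hroot hi

variable (p r) in
def blockPhiₗ : (Fin r → ZMod p × ZMod p) →ₗ[ZMod p] Matrix (Fin 2) (Fin (2 * r)) (ZMod p) where
  toFun v := blockPhi p r (fun i => (v i).1) (fun i => (v i).2)
  map_add' v w := by
    ext u j
    simp only [blockPhi, of_apply, Matrix.add_apply, Pi.add_apply, Prod.fst_add, Prod.snd_add]
    split_ifs <;> ring
  map_smul' a v := by
    ext u j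
    simp only [blockPhi, of_apply, Matrix.smul_apply, Pi.smul_apply, Prod.smul_fst, Prod.smul_snd,
      smul_eq_mul, RingHom.id_apply]
    split_ifs <;> ring

theorem injective_blockPhiₗ : Function.Injective (blockPhiₗ p r) := by
  refine (injective_iff_map_eq_zero _).mpr fun v hv => ?_
  obtain ⟨hc, hd⟩ := (blockPhi_eq_zero_iff (fun i => (v i).1) (fun i => (v i).2)).mp hv
  exact funext fun i => Prod.ext (congrFun hc i) (congrFun hd i)

end blockPhi

noncomputable def pairEquivOfExistsUnique {k K : Type*} [CommRing k] [Ring K] [Algebra k K]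
    (ω : K) (hω : ∀ x : K, ∃! cd : k × k, x = algebraMap k K cd.1 + cd.2 • ω) : (k × k) ≃ₗ[k] K :=
  LinearEquiv.ofBijective ((Algebra.linearMap k K).coprod (LinearMap.toSpanSingleton k K ω))
    ((Function.bijective_iff_existsUnique _).mpr fun x => by simpa [eq_comm] using hω x)

theorem stmt_7_general (p : ℕ) (hp : p.Prime) (h5 : p % 5 = 2 ∨ p % 5 = 3) (r : ℕ)
    (K : Type) [Field K] [Algebra (ZMod p) K]
    (ω : K)
    (hω : ∀ x : K, ∃! cd : ZMod p × ZMod p,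
      x = algebraMap (ZMod p) K cd.1 + cd.2 • ω) :
    ∃ φ : (Fin r → K) →ₗ[ZMod p] Matrix (Fin 2) (Fin (2 * r)) (ZMod p),
      (∀ c d : Fin r → ZMod p,
        φ (fun i => algebraMap (ZMod p) K (c i) + d i • ω) = blockPhi p r c d) ∧
      Function.Injective φ ∧
      Module.finrank (ZMod p) (LinearMap.range φ) = 2 * r ∧
      ∀ M ∈ LinearMap.range φ, M ≠ 0 → M.rank = 2 := by
  have := Fact.mk hp
  let e := LinearEquiv.piCongrRight fun _ : Fin r => pairEquivOfExistsUnique ω hω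
  refine ⟨blockPhiₗ p r ∘ₗ e.symm.toLinearMap, fun c d => ?_,
    injective_blockPhiₗ.comp e.symm.injective, ?_, ?_⟩
  · have : e.symm (fun i => algebraMap (ZMod p) K (c i) + d i • ω) = fun i => (c i, d i) :=
      e.symm_apply_eq.mpr rfl
    simp only [LinearMap.comp_apply, LinearEquiv.coe_coe, this]
    rfl
  · rw [LinearEquiv.range_comp, LinearMap.finrank_range_of_inj injective_blockPhiₗ]
    simp [Module.finrank_pi_fintype, Module.finrank_prod, mul_comm]
  · rintro M hM hM0
    rw [LinearEquiv.range_comp] at hM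
    obtain ⟨v, rfl⟩ := hM
    exact rank_blockPhi (ZMod.mul_self_ne_add_one h5) (fun i => (v i).1) (fun i => (v i).2) hM0

/-- For p ≡ 2 or 3 (mod 5), the image of φ_O : (F_{p²})ʳ → M_{2×2r}(F_p) is an
F_p-subspace of dimension 2r all of whose nonzero elements have rank 2:
a [2×2r, 2r, 2] rank-metric code. -/
theorem stmt_7 (p : ℕ) (hp : p.Prime) (h5 : p % 5 = 2 ∨ p % 5 = 3) (r : ℕ) (hr : 1 ≤ r)
    (K : Type) [Field K] [Fintype K] [Algebra (ZMod p) K]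
    (hK : Fintype.card K = p ^ 2) (ω : K)
    (hω : ∀ x : K, ∃! cd : ZMod p × ZMod p,
      x = algebraMap (ZMod p) K cd.1 + cd.2 • ω) :
    ∃ φ : (Fin r → K) →ₗ[ZMod p] Matrix (Fin 2) (Fin (2 * r)) (ZMod p),
      (∀ c d : Fin r → ZMod p,
        φ (fun i => algebraMap (ZMod p) K (c i) + d i • ω) = blockPhi p r c d) ∧
      Function.Injective φ ∧
      Module.finrank (ZMod p) (LinearMap.range φ) = 2 * r ∧
      ∀ M ∈ LinearMap.range φ, M ≠ 0 → M.rank = 2 :=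
  stmt_7_general p hp h5 r K ω hω
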